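/- arXiv:2110.04367 — 2 statements merged into one kernel-verified Lean document; each statement's English description precedes it below -/
import Mathlib

section
/- For x, y ∈ ℝ^d and ω ~ N(0, I_d), E[cosh(ω^⊤(x+y)) cos(ω^⊤(x-y))] = exp(2 x^⊤ y) cos(‖x‖² - ‖y‖²). -/
open MeasureTheory ProbabilityTheory

noncomputable def stdGaussian (d : ℕ) : Measure (Fin d → ℝ) :=
  Measure.pi fun _ => gaussianReal 0 1

def dotR {d : ℕ} (u v : Fin d → ℝ) : ℝ := ∑ i, u i * v i

/-! With `a = x + y` and `b = x - y`, `cosh (ω·a) cos (ω·b)` is the average of the real parts of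
`exp (∑ cᵢ ωᵢ)` for `c = ±a + i b`. The coordinates of `ω` are independent standard Gaussians, so
the complex moment generating function factorises: `E[exp (∑ cᵢ ωᵢ)] = exp (∑ cᵢ² / 2)
= exp ((|a|² - |b|²) / 2 ± i a·b)`, and `(|a|² - |b|²) / 2 = 2 x·y`, `a·b = |x|² - |y|²`. -/

open Complex
open scoped NNReal

section PiGaussian

variable {ι : Type*} [Fintype ι] (m : ι → ℝ) (v : ι → ℝ≥0) (c : ι → ℂ)

lemma integrable_cexp_sum_mul_pi_gaussianReal :
    Integrable (fun ω : ι → ℝ => cexp (∑ i, c i * ω i))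
      (Measure.pi fun i => gaussianReal (m i) (v i)) := by
  simp_rw [Complex.exp_sum]
  exact Integrable.fintype_prod (f := fun i (x : ℝ) => cexp (c i * x)) fun i =>
    integrable_cexp_mul_of_re_mem_integrableExpSet (X := id) aemeasurable_id (by simp)

lemma integral_cexp_sum_mul_pi_gaussianReal :
    ∫ ω : ι → ℝ, cexp (∑ i, c i * ω i) ∂(Measure.pi fun i => gaussianReal (m i) (v i))
      = cexp (∑ i, (c i * m i + v i * c i ^ 2 / 2)) := by
  simp_rw [Complex.exp_sum]
  rw [integral_fintype_prod_eq_prod (f := fun i (x : ℝ) => cexp (c i * x))]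
  exact Finset.prod_congr rfl fun i _ => complexMGF_id_gaussianReal (c i)

end PiGaussian

lemma dotR_neg_right {d : ℕ} (u v : Fin d → ℝ) : dotR u (-v) = -dotR u v := by
  simp [dotR]

lemma dotR_neg_left {d : ℕ} (u v : Fin d → ℝ) : dotR (-u) v = -dotR u v := by
  simp [dotR]

lemma sum_sq_add_sub_sum_sq_sub {d : ℕ} (x y : Fin d → ℝ) :
    ((∑ i, (x + y) i ^ 2) - ∑ i, (x - y) i ^ 2) / 2 = 2 * dotR x y := by
  simp only [dotR, Pi.add_apply, Pi.sub_apply, ← Finset.sum_sub_distrib, Finset.sum_div,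
    Finset.mul_sum]
  exact Finset.sum_congr rfl fun i _ => by ring

lemma dotR_add_sub {d : ℕ} (x y : Fin d → ℝ) :
    dotR (x + y) (x - y) = (∑ i, x i ^ 2) - ∑ i, y i ^ 2 := by
  simp only [dotR, Pi.add_apply, Pi.sub_apply, ← Finset.sum_sub_distrib]
  exact Finset.sum_congr rfl fun i _ => by ring

section StdGaussian

variable {d : ℕ}

lemma integral_cexp_sum_mul_stdGaussian (c : Fin d → ℂ) :
    ∫ ω, cexp (∑ i, c i * ω i) ∂stdGaussian d = cexp (∑ i, c i ^ 2 / 2) := by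
  simpa [_root_.stdGaussian] using
    integral_cexp_sum_mul_pi_gaussianReal (fun _ => 0) (fun _ => 1) c

variable (a b : Fin d → ℝ)

lemma exp_dotR_mul_cos_dotR_eq_re_cexp (ω : Fin d → ℝ) :
    Real.exp (dotR ω a) * Real.cos (dotR ω b) = (cexp (∑ i, (a i + b i * I) * ω i)).re := by
  simp [Complex.exp_re, Complex.re_sum, Complex.im_sum, dotR, mul_comm]

lemma integrable_exp_dotR_mul_cos_dotR :
    Integrable (fun ω => Real.exp (dotR ω a) * Real.cos (dotR ω b)) (stdGaussian d) := by
  simp_rw [exp_dotR_mul_cos_dotR_eq_re_cexp]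
  exact (integrable_cexp_sum_mul_pi_gaussianReal _ _ _).re

lemma integral_exp_dotR_mul_cos_dotR :
    ∫ ω, Real.exp (dotR ω a) * Real.cos (dotR ω b) ∂stdGaussian d
      = Real.exp (((∑ i, a i ^ 2) - ∑ i, b i ^ 2) / 2) * Real.cos (dotR a b) := by
  have hsum : ∑ i, (a i + b i * I : ℂ) ^ 2 / 2
      = (((∑ i, a i ^ 2) - ∑ i, b i ^ 2) / 2 : ℝ) + (dotR a b : ℝ) * I := by
    simp only [dotR]
    push_cast
    rw [← Finset.sum_sub_distrib, Finset.sum_div, Finset.sum_mul, ← Finset.sum_add_distrib]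
    exact Finset.sum_congr rfl fun i _ => by linear_combination ((b i : ℂ) ^ 2 / 2) * I_sq
  simp_rw [exp_dotR_mul_cos_dotR_eq_re_cexp]
  calc ∫ ω, (cexp (∑ i, (a i + b i * I) * ω i)).re ∂stdGaussian d
      = (∫ ω, cexp (∑ i, (a i + b i * I) * ω i) ∂stdGaussian d).re :=
        integral_re (integrable_cexp_sum_mul_pi_gaussianReal _ _ _)
    _ = _ := by
      rw [integral_cexp_sum_mul_stdGaussian, hsum, exp_add, ← ofReal_exp, re_ofReal_mul,
        exp_ofReal_mul_I_re]

end StdGaussian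

theorem stmt6 (d : ℕ) (x y : Fin d → ℝ) :
    (∫ ω, Real.cosh (dotR ω (x + y)) * Real.cos (dotR ω (x - y)) ∂ stdGaussian d)
      = Real.exp (2 * dotR x y) * Real.cos ((∑ i, x i ^ 2) - (∑ i, y i ^ 2)) := by
  set a := x + y
  set b := x - y
  have hcosh : ∀ ω, Real.cosh (dotR ω a) * Real.cos (dotR ω b)
      = (Real.exp (dotR ω a) * Real.cos (dotR ω b)
        + Real.exp (dotR ω (-a)) * Real.cos (dotR ω b)) / 2 := fun ω => by
    rw [Real.cosh_eq, dotR_neg_right]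
    ring
  simp_rw [hcosh]
  rw [integral_div, integral_add (integrable_exp_dotR_mul_cos_dotR a b)
    (integrable_exp_dotR_mul_cos_dotR (-a) b), integral_exp_dotR_mul_cos_dotR,
    integral_exp_dotR_mul_cos_dotR, dotR_neg_left, Real.cos_neg]
  simp only [Pi.neg_apply, neg_sq, sum_sq_add_sub_sum_sq_sub, dotR_add_sub, a, b]
  ring
end

section
/- Let ω₁,...,ω_m be i.i.d. N(0, I_d) and define the positive softmax estimator SM⁺_m(x,y) = (1/m) Σᵢ exp(ωᵢ^⊤ x - ‖x‖²/2) exp(ωᵢ^⊤ y - ‖y‖²/2). Then its mean squared error equals (1/m) exp(‖z‖²) exp(2 x^⊤ y) (1 - exp(-‖z‖²)) where z = x + y. -/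
open MeasureTheory ProbabilityTheory

open Real

/-!
The estimator is the empirical mean of `m` i.i.d. copies of
`g ω = exp (-(‖x‖² + ‖y‖²) / 2) * exp (ω ⬝ z)`, so its mean squared error about `E g` is
`Var g / m`.
The Gaussian moment generating function `E exp (ω ⬝ t) = exp (‖t‖² / 2)` gives `E g = exp (x ⬝ y)`
(the estimator is unbiased) and `E g² = exp (‖z‖² + 2 x ⬝ y)`, using `‖z‖² = ‖x‖² + ‖y‖² + 2 x ⬝ y`.
-/

lemma exp_dotR_eq_prod {d : ℕ} (w t : Fin d → ℝ) :
    exp (dotR w t) = ∏ j, exp (t j * w j) := by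
  simp only [dotR, exp_sum, mul_comm]

lemma dotR_add {d : ℕ} (w x y : Fin d → ℝ) : dotR w (x + y) = dotR w x + dotR w y := by
  simp only [dotR, Pi.add_apply, mul_add, Finset.sum_add_distrib]

lemma dotR_smul {d : ℕ} (c : ℝ) (w t : Fin d → ℝ) : dotR w (c • t) = c * dotR w t := by
  simp only [dotR, Pi.smul_apply, smul_eq_mul, Finset.mul_sum, mul_left_comm]

lemma sum_add_sq_eq {d : ℕ} (x y : Fin d → ℝ) :
    ∑ j, (x j + y j) ^ 2 = ∑ j, x j ^ 2 + ∑ j, y j ^ 2 + 2 * dotR x y := by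
  simp only [dotR, add_sq, Finset.sum_add_distrib, Finset.mul_sum, mul_assoc]
  ring

instance (d : ℕ) : IsProbabilityMeasure (stdGaussian d) := by
  unfold _root_.stdGaussian; infer_instance

lemma integrable_exp_dotR_stdGaussian {d : ℕ} (t : Fin d → ℝ) :
    Integrable (fun w => exp (dotR w t)) (stdGaussian d) := by
  simp_rw [exp_dotR_eq_prod]
  exact Integrable.fintype_prod fun j => integrable_exp_mul_gaussianReal (t j)

lemma integral_exp_dotR_stdGaussian {d : ℕ} (t : Fin d → ℝ) :
    ∫ w, exp (dotR w t) ∂stdGaussian d = exp ((∑ j, t j ^ 2) / 2) := by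
  have hmgf (s : ℝ) : ∫ v, exp (s * v) ∂gaussianReal 0 1 = exp (s ^ 2 / 2) := by
    simpa [mgf] using congrFun (mgf_id_gaussianReal (μ := 0) (v := 1)) s
  simp_rw [exp_dotR_eq_prod, _root_.stdGaussian]
  rw [integral_fintype_prod_eq_prod fun j v => exp (t j * v)]
  simp_rw [hmgf, ← exp_sum, Finset.sum_div]

lemma memLp_exp_dotR_stdGaussian {d : ℕ} (t : Fin d → ℝ) :
    MemLp (fun w => exp (dotR w t)) 2 (stdGaussian d) := by
  refine (memLp_two_iff_integrable_sq
    (integrable_exp_dotR_stdGaussian t).aestronglyMeasurable).mpr ?_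
  simp_rw [← exp_nat_mul, Nat.cast_ofNat, ← dotR_smul]
  exact integrable_exp_dotR_stdGaussian _

lemma variance_exp_dotR_stdGaussian {d : ℕ} (t : Fin d → ℝ) :
    Var[fun w => exp (dotR w t); stdGaussian d]
      = exp (2 * ∑ j, t j ^ 2) - exp (∑ j, t j ^ 2) := by
  rw [variance_eq_sub (memLp_exp_dotR_stdGaussian t)]
  simp_rw [Pi.pow_apply, ← exp_nat_mul, Nat.cast_ofNat, ← dotR_smul,
    integral_exp_dotR_stdGaussian]
  simp only [Pi.smul_apply, smul_eq_mul, mul_pow, ← Finset.mul_sum, ← exp_nat_mul]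
  ring_nf

lemma integral_sq_sampleMean_sub {ι E : Type*} [Fintype ι] [Nonempty ι] [MeasurableSpace E]
    (ν : Measure E) [IsProbabilityMeasure ν] {f : E → ℝ} (hf : MemLp f 2 ν) :
    ∫ W : ι → E, (1 / (Fintype.card ι : ℝ) * ∑ i, f (W i) - ∫ v, f v ∂ν) ^ 2
        ∂Measure.pi (fun _ => ν) = Var[f; ν] / Fintype.card ι := by
  set n : ℝ := (Fintype.card ι : ℝ)
  have hn : n ≠ 0 := Nat.cast_ne_zero.mpr Fintype.card_ne_zero
  set S : (ι → E) → ℝ := ∑ i, fun W => f (W i) with hS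
  have hS_apply (W : ι → E) : S W = ∑ i, f (W i) := Finset.sum_apply _ _ _
  have hS_int : ∫ W, S W ∂Measure.pi (fun _ => ν) = n * ∫ v, f v ∂ν := by
    simp_rw [hS_apply]
    rw [integral_finsetSum _ fun i _ => integrable_comp_eval (hf.integrable one_le_two)]
    simp [integral_comp_eval (μ := fun _ => ν) hf.aestronglyMeasurable, n]
  have hS_meas : AEMeasurable S (Measure.pi fun _ => ν) :=
    Finset.aemeasurable_sum _ fun i _ =>
      hf.aestronglyMeasurable.aemeasurable.comp_quasiMeasurePreserving
        (measurePreserving_eval _ i).quasiMeasurePreserving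
  calc _ = Var[fun W => 1 / n * S W; Measure.pi fun _ => ν] := by
        rw [variance_eq_integral (hS_meas.const_mul _), integral_const_mul, hS_int,
          ← mul_assoc, one_div_mul_cancel hn, one_mul]
        simp_rw [hS_apply]
    _ = (1 / n) ^ 2 * ∑ i : ι, Var[f; ν] := by
        rw [variance_const_mul, hS, variance_sum_pi fun _ => hf]
    _ = Var[f; ν] / n := by
        rw [Finset.sum_const, Finset.card_univ, nsmul_eq_mul]
        field_simp
        rfl

lemma exp_sub_mul_exp_sub {d : ℕ} (w x y : Fin d → ℝ) (a b : ℝ) :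
    exp (dotR w x - a) * exp (dotR w y - b) = exp (-(a + b)) * exp (dotR w (x + y)) := by
  rw [← exp_add, ← exp_add, dotR_add]
  ring_nf

theorem stmt7 (d m : ℕ) (hm : 0 < m) (x y : Fin d → ℝ) :
    (∫ W : Fin m → Fin d → ℝ,
        ((1 / (m : ℝ)) * ∑ i, Real.exp (dotR (W i) x - (∑ j, x j ^ 2) / 2) *
            Real.exp (dotR (W i) y - (∑ j, y j ^ 2) / 2)
          - Real.exp (dotR x y)) ^ 2
        ∂ Measure.pi (fun _ : Fin m => stdGaussian d))
      = (1 / (m : ℝ)) * Real.exp (∑ j, (x j + y j) ^ 2) * Real.exp (2 * dotR x y) *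
          (1 - Real.exp (-(∑ j, (x j + y j) ^ 2))) := by
  set A := ∑ j, x j ^ 2
  set B := ∑ j, y j ^ 2
  set S := ∑ j, (x j + y j) ^ 2
  have hS : S = A + B + 2 * dotR x y := sum_add_sq_eq x y
  have hnormS : ∑ j, (x + y) j ^ 2 = S := rfl
  have hmean : ∫ w, exp (-(A / 2 + B / 2)) * exp (dotR w (x + y)) ∂stdGaussian d
      = exp (dotR x y) := by
    rw [integral_const_mul, integral_exp_dotR_stdGaussian, hnormS, ← exp_add, exp_eq_exp]
    linarith
  have hvar : Var[fun w => exp (-(A / 2 + B / 2)) * exp (dotR w (x + y)); stdGaussian d]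
      = exp S * exp (2 * dotR x y) * (1 - exp (-S)) := by
    rw [variance_const_mul, variance_exp_dotR_stdGaussian, hnormS, ← exp_nat_mul, mul_sub,
      mul_sub, mul_one, ← exp_add, ← exp_add, ← exp_add, ← exp_add]
    congr 1 <;> rw [exp_eq_exp] <;> push_cast <;> linarith
  have : Nonempty (Fin m) := Fin.pos_iff_nonempty.mp hm
  have hsampleMean := integral_sq_sampleMean_sub (ι := Fin m) (stdGaussian d)
    ((memLp_exp_dotR_stdGaussian (x + y)).const_mul (exp (-(A / 2 + B / 2))))
  simp_rw [exp_sub_mul_exp_sub, ← hmean]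
  rw [Fintype.card_fin] at hsampleMean
  rw [hsampleMean, hvar]
  ring
end
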